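/- Let ν ≥ 1 be an integer. Consider the ℂ-module V = ℂ[[x]]((y)) of formal Laurent series in y with coefficients in ℂ[[x]], the submodule A = ℂ[[x,y]] (series with no negative powers of y), and the submodule B spanned (in the appropriate completed sense) by the monomials x^j y^{j-i-ν} for i, j ≥ 0. Then the quotient V/(A + B) is a ℂ-vector space of dimension ν(ν-1)/2, with basis given by the classes of the monomials x^j y^k for j - ν < k < 0, j ≥ 0. -/

import Mathlib

/-! Both `A` and `B` are cut out by the vanishing of coefficients, and every exponent `(j, k)` with
`k ≥ 0` or `k ≤ j - ν` is constrained by one of them. Hence `A + B` is the kernel of the map reading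
off the coefficients of `x^j y^k` at the remaining exponents `j - ν < k < 0`, and this map is onto
the functions on that finite set, the monomials mapping to the standard basis. Writing `m = j - k`,
that set is `{(m, j) : j < m < ν}`, of size `∑_{m<ν} m = ν(ν-1)/2`. -/

noncomputable section

/-- The ℂ-module `V = ℂ[[x]]((y))` of formal Laurent series in `y` with coefficients
in `ℂ[[x]]`. -/
abbrev V : Type := LaurentSeries (PowerSeries ℂ)

/-- The submodule `A = ℂ[[x,y]] ⊂ V`: Laurent series with no negative powers of `y`. -/
def A : Submodule ℂ V where
  carrier := {f | ∀ k : ℤ, k < 0 → f.coeff k = 0}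
  zero_mem' := by intro k _; simp
  add_mem' := by
    intro f g hf hg k hk
    simp [HahnSeries.coeff_add, hf k hk, hg k hk]
  smul_mem' := by
    intro c f hf k hk
    simp [HahnSeries.coeff_smul, hf k hk]

/-- The submodule `B ⊂ V` spanned, in the completed sense, by the monomials
`x^j y^{j-i-ν}` for `i, j ≥ 0`: the Laurent series all of whose monomials `x^j y^k`
satisfy `k ≤ j - ν`. -/
def B (ν : ℕ) : Submodule ℂ V where
  carrier := {f | ∀ (k : ℤ) (j : ℕ), (j : ℤ) - ν < k → (PowerSeries.coeff (R := ℂ) j) (f.coeff k) = 0}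
  zero_mem' := by intro k j _; simp
  add_mem' := by
    intro f g hf hg k j h
    simp [HahnSeries.coeff_add, hf k j h, hg k j h]
  smul_mem' := by
    intro c f hf k j h
    simp [HahnSeries.coeff_smul, hf k j h]

/-- The monomial `x^j y^k` as an element of `V`. -/
def monomial (j : ℕ) (k : ℤ) : V := HahnSeries.single k (PowerSeries.X ^ j)

open HahnSeries

abbrev GapExponents (ν : ℕ) : Type := {p : ℕ × ℤ // (p.1 : ℤ) - ν < p.2 ∧ p.2 < 0}

def gapExponentsEquivSigma (ν : ℕ) : GapExponents ν ≃ Σ m : Fin ν, Fin m where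
  toFun p := ⟨⟨(p.1.1 - p.1.2).toNat, by omega⟩, ⟨p.1.1, by simp only; omega⟩⟩
  invFun q := ⟨(q.2, q.2 - q.1), by omega⟩
  left_inv p := Subtype.ext (Prod.ext rfl (by simp only; omega))
  right_inv q := by
    obtain ⟨⟨m, hm⟩, ⟨j, hj⟩⟩ := q
    refine Sigma.ext (Fin.ext ?_) ((Fin.heq_ext_iff ?_).mpr rfl) <;> simp only <;> omega

instance (ν : ℕ) : Fintype (GapExponents ν) :=
  Fintype.ofEquiv _ (gapExponentsEquivSigma ν).symm

theorem natCard_gapExponents (ν : ℕ) : Nat.card (GapExponents ν) = ν * (ν - 1) / 2 := by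
  rw [Nat.card_congr (gapExponentsEquivSigma ν), Nat.card_sigma]
  simp only [Nat.card_eq_fintype_card, Fintype.card_fin]
  rw [Fin.sum_univ_eq_sum_range (fun m => m) ν, Finset.sum_range_id]

def gapCoeffs (ν : ℕ) : V →ₗ[ℂ] (GapExponents ν → ℂ) where
  toFun f p := PowerSeries.coeff p.1.1 (f.coeff p.1.2)
  map_add' f g := funext fun p => by simp
  map_smul' c f := funext fun p => by simp

theorem coeff_coeff_monomial (j j' : ℕ) (k k' : ℤ) :
    PowerSeries.coeff j' ((monomial j k).coeff k') = if j' = j ∧ k' = k then 1 else 0 := by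
  by_cases hk : k' = k
  · simp [monomial, hk, PowerSeries.coeff_X_pow]
  · simp [monomial, hk]

theorem gapCoeffs_monomial (ν : ℕ) (p : GapExponents ν) :
    gapCoeffs ν (monomial p.1.1 p.1.2) = Pi.single p 1 := by
  ext q
  simp [gapCoeffs, coeff_coeff_monomial, Pi.single_apply, Subtype.ext_iff, Prod.ext_iff]

theorem gapCoeffs_surjective (ν : ℕ) : Function.Surjective (gapCoeffs ν) := by
  intro c
  refine ⟨∑ p, c p • monomial p.1.1 p.1.2, ?_⟩
  simpa [gapCoeffs_monomial] using (pi_eq_sum_univ' c).symm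

theorem ker_gapCoeffs (ν : ℕ) : LinearMap.ker (gapCoeffs ν) = A ⊔ B ν := by
  refine le_antisymm (fun f hf => ?_) (sup_le (fun f hf => ?_) (fun f hf => ?_))
  · -- the part of `f` with negative `y`-exponents lies in `B`, the rest in `A`
    refine Submodule.mem_sup.2 ⟨f - truncLT 0 f, fun k hk => ?_, truncLT 0 f, fun k j hjk => ?_,
      sub_add_cancel f _⟩
    · simp [HahnSeries.coeff_truncLT, hk]
    · rw [HahnSeries.coeff_truncLT]
      split_ifs with hk
      · exact congrFun hf ⟨(j, k), hjk, hk⟩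
      · simp
  · exact funext fun p => by simp [gapCoeffs, hf p.1.2 p.2.2]
  · exact funext fun p => by simp [gapCoeffs, hf p.1.2 p.1.1 p.2.1]

def quotientEquivFun (ν : ℕ) : (V ⧸ (A ⊔ B ν)) ≃ₗ[ℂ] (GapExponents ν → ℂ) :=
  (Submodule.quotEquivOfEq _ _ (ker_gapCoeffs ν).symm).trans
    ((gapCoeffs ν).quotKerEquivOfSurjective (gapCoeffs_surjective ν))

theorem quotientEquivFun_mk (ν : ℕ) (f : V) :
    quotientEquivFun ν (Submodule.Quotient.mk f) = gapCoeffs ν f := by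
  simp [quotientEquivFun]

theorem stmt1_general (ν : ℕ) :
    ∃ b : Module.Basis {p : ℕ × ℤ // (p.1 : ℤ) - ν < p.2 ∧ p.2 < 0} ℂ (V ⧸ (A ⊔ B ν)),
      (∀ p, b p = Submodule.Quotient.mk (monomial p.1.1 p.1.2)) ∧
        Module.finrank ℂ (V ⧸ (A ⊔ B ν)) = ν * (ν - 1) / 2 := by
  let b := Module.Basis.ofEquivFun (quotientEquivFun ν)
  refine ⟨b, fun p => ?_, ?_⟩
  · rw [Module.Basis.coe_ofEquivFun, LinearEquiv.symm_apply_eq, quotientEquivFun_mk,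
      gapCoeffs_monomial]
  · rw [Module.finrank_eq_nat_card_basis b, natCard_gapExponents]

/-- for `ν ≥ 1`, the quotient `V/(A + B)` is a ℂ-vector space of dimension
`ν(ν-1)/2`, admitting as a basis the classes of the monomials `x^j y^k` for
`j - ν < k < 0`, `j ≥ 0`. -/
theorem stmt1 (ν : ℕ) (hν : 1 ≤ ν) :
    ∃ b : Module.Basis {p : ℕ × ℤ // (p.1 : ℤ) - ν < p.2 ∧ p.2 < 0} ℂ (V ⧸ (A ⊔ B ν)),
      (∀ p, b p = Submodule.Quotient.mk (monomial p.1.1 p.1.2)) ∧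
        Module.finrank ℂ (V ⧸ (A ⊔ B ν)) = ν * (ν - 1) / 2 :=
  stmt1_general ν

end
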